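/- Let (A⊗V,μ_{A⊗V}) and (A⊗W,μ_{A⊗W}) be weak crossed products with preunits ν_V and ν_W, and let T:A⊗V→A⊗W, S:A⊗W→A⊗V be morphisms satisfying T∘μ_{A⊗V}=μ_{A⊗W}∘(T⊗T), S∘T=∇_{A⊗V}, and T∘S=∇_{A⊗W}. Then S is multiplicative, i.e. S∘μ_{A⊗W}=μ_{A⊗V}∘(S⊗S). If moreover T∘ν_V=ν_W, then S∘ν_W=ν_V. -/

import Mathlib

open CategoryTheory MonoidalCategory

universe v u

namespace WeakCrossed

variable {C : Type u} [Category.{v} C] [MonoidalCategory C]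

/-- The monoid axioms for a triple `(A, η, μ)` in a monoidal category. -/
def IsMon (A : C) (eta : 𝟙_ C ⟶ A) (mu : A ⊗ A ⟶ A) : Prop :=
  (eta ▷ A) ≫ mu = (λ_ A).hom ∧ (A ◁ eta) ≫ mu = (ρ_ A).hom ∧
    (mu ▷ A) ≫ mu = (α_ A A A).hom ≫ (A ◁ mu) ≫ mu

/-- The morphism `(μ_A ⊗ Y) ∘ (A ⊗ f) : (A ⊗ X) ⊗ Z ⟶ A ⊗ Y` for `f : X ⊗ Z ⟶ A ⊗ Y`. -/
def phi (A : C) {X Z Y : C} (mu : A ⊗ A ⟶ A) (f : X ⊗ Z ⟶ A ⊗ Y) :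
    (A ⊗ X) ⊗ Z ⟶ A ⊗ Y :=
  (α_ A X Z).hom ≫ (A ◁ f) ≫ (α_ A A Y).inv ≫ (mu ▷ Y)

/-- The measuring condition `(μ_A ⊗ V) ∘ (A ⊗ ψ) ∘ (ψ ⊗ A) = ψ ∘ (V ⊗ μ_A)`. -/
def Measuring (A V : C) (mu : A ⊗ A ⟶ A) (psi : V ⊗ A ⟶ A ⊗ V) : Prop :=
  (psi ▷ A) ≫ phi A mu psi = (α_ V A A).hom ≫ (V ◁ mu) ≫ psi

/-- The idempotent `∇_{A⊗V} = (μ_A ⊗ V) ∘ (A ⊗ ψ) ∘ (A ⊗ V ⊗ η_A)`. -/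
def nabla (A V : C) (eta : 𝟙_ C ⟶ A) (mu : A ⊗ A ⟶ A) (psi : V ⊗ A ⟶ A ⊗ V) :
    A ⊗ V ⟶ A ⊗ V :=
  (ρ_ (A ⊗ V)).inv ≫ ((A ⊗ V) ◁ eta) ≫ phi A mu psi

/-- The twisted condition
`(μ_A ⊗ V) ∘ (A ⊗ ψ) ∘ (σ ⊗ A) = (μ_A ⊗ V) ∘ (A ⊗ σ) ∘ (ψ ⊗ V) ∘ (V ⊗ ψ)`. -/
def Twisted (A V : C) (mu : A ⊗ A ⟶ A) (psi : V ⊗ A ⟶ A ⊗ V)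
    (sig : V ⊗ V ⟶ A ⊗ V) : Prop :=
  (sig ▷ A) ≫ phi A mu psi =
    (α_ V V A).hom ≫ (V ◁ psi) ≫ (α_ V A V).inv ≫ (psi ▷ V) ≫ phi A mu sig

/-- The cocycle condition
`(μ_A ⊗ V) ∘ (A ⊗ σ) ∘ (σ ⊗ V) = (μ_A ⊗ V) ∘ (A ⊗ σ) ∘ (ψ ⊗ V) ∘ (V ⊗ σ)`. -/
def Cocycle (A V : C) (mu : A ⊗ A ⟶ A) (psi : V ⊗ A ⟶ A ⊗ V)
    (sig : V ⊗ V ⟶ A ⊗ V) : Prop :=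
  (sig ▷ V) ≫ phi A mu sig =
    (α_ V V V).hom ≫ (V ◁ sig) ≫ (α_ V A V).inv ≫ (psi ▷ V) ≫ phi A mu sig

/-- The weak crossed product multiplication
`μ_{A⊗V} = (μ_A ⊗ V) ∘ (μ_A ⊗ σ) ∘ (A ⊗ ψ ⊗ V)`. -/
def prodAV (A V : C) (mu : A ⊗ A ⟶ A) (psi : V ⊗ A ⟶ A ⊗ V)
    (sig : V ⊗ V ⟶ A ⊗ V) : (A ⊗ V) ⊗ (A ⊗ V) ⟶ A ⊗ V :=
  (α_ A V (A ⊗ V)).hom ≫ (A ◁ ((α_ V A V).inv ≫ (psi ▷ V) ≫ (α_ A V V).hom)) ≫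
    (α_ A A (V ⊗ V)).inv ≫ (mu ⊗ₘ sig) ≫ (α_ A A V).inv ≫ (mu ▷ V)

/-- The morphism `η_A ⊗ V : V ⟶ A ⊗ V`. -/
def etaT (A V : C) (eta : 𝟙_ C ⟶ A) : V ⟶ A ⊗ V := (λ_ V).inv ≫ (eta ▷ V)

/-- The morphism `β_ν = (μ_A ⊗ V) ∘ (A ⊗ ν) : A ⟶ A ⊗ V`. -/
def beta (A V : C) (mu : A ⊗ A ⟶ A) (nu : 𝟙_ C ⟶ A ⊗ V) : A ⟶ A ⊗ V :=
  (ρ_ A).inv ≫ (A ◁ nu) ≫ (α_ A A V).inv ≫ (mu ▷ V)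

/-- Preunit condition (pre1):
`(μ_A ⊗ V) ∘ (A ⊗ σ) ∘ (ψ ⊗ V) ∘ (V ⊗ ν) = ∇_{A⊗V} ∘ (η_A ⊗ V)`. -/
def Pre1 (A V : C) (eta : 𝟙_ C ⟶ A) (mu : A ⊗ A ⟶ A) (psi : V ⊗ A ⟶ A ⊗ V)
    (sig : V ⊗ V ⟶ A ⊗ V) (nu : 𝟙_ C ⟶ A ⊗ V) : Prop :=
  (ρ_ V).inv ≫ (V ◁ nu) ≫ (α_ V A V).inv ≫ (psi ▷ V) ≫ phi A mu sig =
    etaT A V eta ≫ nabla A V eta mu psi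

/-- Preunit condition (pre2):
`(μ_A ⊗ V) ∘ (A ⊗ σ) ∘ (ν ⊗ V) = ∇_{A⊗V} ∘ (η_A ⊗ V)`. -/
def Pre2 (A V : C) (eta : 𝟙_ C ⟶ A) (mu : A ⊗ A ⟶ A) (psi : V ⊗ A ⟶ A ⊗ V)
    (sig : V ⊗ V ⟶ A ⊗ V) (nu : 𝟙_ C ⟶ A ⊗ V) : Prop :=
  (λ_ V).inv ≫ (nu ▷ V) ≫ phi A mu sig = etaT A V eta ≫ nabla A V eta mu psi

/-- Preunit condition (pre3): `(μ_A ⊗ V) ∘ (A ⊗ ψ) ∘ (ν ⊗ A) = β_ν`. -/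
def Pre3 (A V : C) (mu : A ⊗ A ⟶ A) (psi : V ⊗ A ⟶ A ⊗ V)
    (nu : 𝟙_ C ⟶ A ⊗ V) : Prop :=
  (λ_ A).inv ≫ (nu ▷ A) ≫ phi A mu psi = beta A V mu nu

/-- `(A ⊗ V, μ_{A⊗V})` is a weak crossed product: measuring, twisted and cocycle
conditions hold and `∇_{A⊗V} ∘ σ = σ`. -/
def WCP (A V : C) (eta : 𝟙_ C ⟶ A) (mu : A ⊗ A ⟶ A) (psi : V ⊗ A ⟶ A ⊗ V)
    (sig : V ⊗ V ⟶ A ⊗ V) : Prop :=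
  Measuring A V mu psi ∧ Twisted A V mu psi sig ∧ Cocycle A V mu psi sig ∧
    sig ≫ nabla A V eta mu psi = sig

/-- `(A ⊗ V, μ_{A⊗V})` is a weak crossed product with preunit `ν`. -/
def WCPpre (A V : C) (eta : 𝟙_ C ⟶ A) (mu : A ⊗ A ⟶ A) (psi : V ⊗ A ⟶ A ⊗ V)
    (sig : V ⊗ V ⟶ A ⊗ V) (nu : 𝟙_ C ⟶ A ⊗ V) : Prop :=
  WCP A V eta mu psi sig ∧ Pre1 A V eta mu psi sig nu ∧
    Pre2 A V eta mu psi sig nu ∧ Pre3 A V mu psi nu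

/-- `(μ_A ⊗ Y) ∘ (A ⊗ γ) : A ⊗ X ⟶ A ⊗ Y` for `γ : X ⟶ A ⊗ Y`. -/
def tmap (A : C) {X Y : C} (mu : A ⊗ A ⟶ A) (g : X ⟶ A ⊗ Y) : A ⊗ X ⟶ A ⊗ Y :=
  (A ◁ g) ≫ (α_ A A Y).inv ≫ (mu ▷ Y)

/-- Left `A`-linearity of `T : A ⊗ X ⟶ A ⊗ Y`:
`T ∘ (μ_A ⊗ X) = (μ_A ⊗ Y) ∘ (A ⊗ T)`. -/
def LeftLin (A : C) {X Y : C} (mu : A ⊗ A ⟶ A) (T : A ⊗ X ⟶ A ⊗ Y) : Prop :=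
  (mu ▷ X) ≫ T = (α_ A A X).hom ≫ (A ◁ T) ≫ (α_ A A Y).inv ≫ (mu ▷ Y)

/-- `ν` is a preunit for the associative product `m` on `X`. -/
def IsPreunit {X : C} (m : X ⊗ X ⟶ X) (nu : 𝟙_ C ⟶ X) : Prop :=
  (ρ_ X).inv ≫ (X ◁ nu) ≫ m = (λ_ X).inv ≫ (nu ▷ X) ≫ m ∧
  (ρ_ X).inv ≫ (X ◁ nu) ≫ m =
    (ρ_ X).inv ≫ (X ◁ ((λ_ (𝟙_ C)).inv ≫ (nu ⊗ₘ nu) ≫ m)) ≫ m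

/-- Brzeziński normalization conditions: `ψ ∘ (η_V ⊗ A) = A ⊗ η_V`,
`ψ ∘ (V ⊗ η_A) = η_A ⊗ V`, `σ ∘ (η_V ⊗ V) = σ ∘ (V ⊗ η_V) = η_A ⊗ V`. -/
def BrzNorm (A V : C) (eta : 𝟙_ C ⟶ A) (etaV : 𝟙_ C ⟶ V) (psi : V ⊗ A ⟶ A ⊗ V)
    (sig : V ⊗ V ⟶ A ⊗ V) : Prop :=
  (λ_ A).inv ≫ (etaV ▷ A) ≫ psi = (ρ_ A).inv ≫ (A ◁ etaV) ∧
  (ρ_ V).inv ≫ (V ◁ eta) ≫ psi = (λ_ V).inv ≫ (eta ▷ V) ∧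
  (λ_ V).inv ≫ (etaV ▷ V) ≫ sig = (λ_ V).inv ≫ (eta ▷ V) ∧
  (ρ_ V).inv ≫ (V ◁ etaV) ≫ sig = (λ_ V).inv ≫ (eta ▷ V)


/-! The idempotent `∇_{A⊗V}` is absorbed by the product on both sides,
`μ_{A⊗V} ∘ (∇ ⊗ ∇) = μ_{A⊗V} = ∇ ∘ μ_{A⊗V}`, and fixes the preunit, `∇ ∘ ν_V = ν_V`.
Hence `S ∘ μ_{A⊗W} = S ∘ μ_{A⊗W} ∘ (TS ⊗ TS) = ST ∘ μ_{A⊗V} ∘ (S ⊗ S) = μ_{A⊗V} ∘ (S ⊗ S)`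
and `S ∘ ν_W = ST ∘ ν_V = ν_V`.

The absorption identities are computed by writing `∇_{A⊗V}` and `μ_{A⊗V}` as left
`A`-linear extensions `(μ_A ⊗ Y) ∘ (A ⊗ g)` (`tmap`) of `ψ_V ∘ (V ⊗ η_A)` and of
`(μ_A ⊗ V) ∘ (A ⊗ σ_V) ∘ (ψ_V ⊗ V)`; by associativity of `μ_A` such extensions compose
like Kleisli morphisms of the monad `A ⊗ -`. -/

theorem mul_comp_of_retract {X Y : C} {mX : X ⊗ X ⟶ X} {mY : Y ⊗ Y ⟶ Y}
    {T : X ⟶ Y} {S : Y ⟶ X} (hm : mX ≫ T = (T ⊗ₘ T) ≫ mY) (hX : mX ≫ T ≫ S = mX)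
    (hY : ((S ≫ T) ⊗ₘ (S ≫ T)) ≫ mY = mY) :
    mY ≫ S = (S ⊗ₘ S) ≫ mX :=
  calc mY ≫ S = ((S ≫ T) ⊗ₘ (S ≫ T)) ≫ mY ≫ S := by rw [reassoc_of% hY]
    _ = (S ⊗ₘ S) ≫ mX ≫ T ≫ S := by
      rw [← tensorHom_comp_tensorHom, Category.assoc, ← reassoc_of% hm]
    _ = (S ⊗ₘ S) ≫ mX := by rw [hX]

section Kleisli

variable {A : C} {mu : A ⊗ A ⟶ A}

theorem leftLin_tmap (hassoc : (mu ▷ A) ≫ mu = (α_ A A A).hom ≫ (A ◁ mu) ≫ mu)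
    {X Y : C} (g : X ⟶ A ⊗ Y) : LeftLin A mu (tmap A mu g) :=
  calc (mu ▷ X) ≫ (A ◁ g) ≫ (α_ A A Y).inv ≫ (mu ▷ Y)
      = ((A ⊗ A) ◁ g) ≫ (α_ (A ⊗ A) A Y).inv ≫ (((mu ▷ A) ≫ mu) ▷ Y) := by
        rw [← whisker_exchange_assoc]; monoidal
    _ = (α_ A A X).hom ≫ (A ◁ tmap A mu g) ≫ (α_ A A Y).inv ≫ (mu ▷ Y) := by
        rw [hassoc, tmap]; monoidal

theorem tmap_comp_tmap (hassoc : (mu ▷ A) ≫ mu = (α_ A A A).hom ≫ (A ◁ mu) ≫ mu)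
    {X Y Z : C} (g : X ⟶ A ⊗ Y) (h : Y ⟶ A ⊗ Z) :
    tmap A mu g ≫ tmap A mu h = tmap A mu (g ≫ tmap A mu h) := by
  have hh : (mu ▷ Y) ≫ tmap A mu h = _ := leftLin_tmap hassoc h
  simp only [tmap, Category.assoc] at hh ⊢
  simp [hh]

theorem tmap_comp_of_comp_tmap (hassoc : (mu ▷ A) ≫ mu = (α_ A A A).hom ≫ (A ◁ mu) ≫ mu)
    {X Y : C} {f : X ⟶ A ⊗ Y} {g : Y ⟶ A ⊗ Y} (h : f ≫ tmap A mu g = f) :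
    tmap A mu f ≫ tmap A mu g = tmap A mu f := by
  rw [tmap_comp_tmap hassoc, h]

theorem phi_eq_tmap {X Z Y : C} (f : X ⊗ Z ⟶ A ⊗ Y) :
    phi A mu f = (α_ A X Z).hom ≫ tmap A mu f := rfl

end Kleisli

def psiEta (A V : C) (eta : 𝟙_ C ⟶ A) (psi : V ⊗ A ⟶ A ⊗ V) : V ⟶ A ⊗ V :=
  (ρ_ V).inv ≫ (V ◁ eta) ≫ psi

def vMul (A V : C) (mu : A ⊗ A ⟶ A) (psi : V ⊗ A ⟶ A ⊗ V) (sig : V ⊗ V ⟶ A ⊗ V) :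
    V ⊗ (A ⊗ V) ⟶ A ⊗ V :=
  (α_ V A V).inv ≫ (psi ▷ V) ≫ phi A mu sig

section CrossedProduct

variable {A V : C} {eta : 𝟙_ C ⟶ A} {mu : A ⊗ A ⟶ A} {psi : V ⊗ A ⟶ A ⊗ V}
  {sig : V ⊗ V ⟶ A ⊗ V}

theorem nabla_eq_tmap : nabla A V eta mu psi = tmap A mu (psiEta A V eta psi) := by
  simp only [nabla, phi, tmap, psiEta]; monoidal

theorem prodAV_eq_tmap (hassoc : (mu ▷ A) ≫ mu = (α_ A A A).hom ≫ (A ◁ mu) ≫ mu) :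
    prodAV A V mu psi sig = (α_ A V (A ⊗ V)).hom ≫ tmap A mu (vMul A V mu psi sig) := by
  have hsig : (mu ▷ (V ⊗ V)) ≫ tmap A mu sig = _ := leftLin_tmap hassoc sig
  calc prodAV A V mu psi sig
      = (α_ A V (A ⊗ V)).hom ≫ (A ◁ ((α_ V A V).inv ≫ (psi ▷ V) ≫ (α_ A V V).hom)) ≫
          (α_ A A (V ⊗ V)).inv ≫ (mu ▷ (V ⊗ V)) ≫ tmap A mu sig := by
        simp only [prodAV, tmap, MonoidalCategory.tensorHom_def, Category.assoc]
    _ = (α_ A V (A ⊗ V)).hom ≫ tmap A mu (vMul A V mu psi sig) := by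
        rw [hsig]; simp only [vMul, phi, tmap]; monoidal

theorem prodAV_comp_nabla (hassoc : (mu ▷ A) ≫ mu = (α_ A A A).hom ≫ (A ◁ mu) ≫ mu)
    (hsig : sig ≫ nabla A V eta mu psi = sig) :
    prodAV A V mu psi sig ≫ nabla A V eta mu psi = prodAV A V mu psi sig := by
  rw [nabla_eq_tmap] at hsig ⊢
  have hvMul : vMul A V mu psi sig ≫ tmap A mu (psiEta A V eta psi) = vMul A V mu psi sig := by
    simp only [vMul, phi_eq_tmap, Category.assoc, tmap_comp_of_comp_tmap hassoc hsig]
  rw [prodAV_eq_tmap hassoc, Category.assoc, tmap_comp_of_comp_tmap hassoc hvMul]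

theorem nu_comp_nabla (hunit : (eta ▷ A) ≫ mu = (λ_ A).hom) {nu : 𝟙_ C ⟶ A ⊗ V}
    (hpre3 : Pre3 A V mu psi nu) : nu ≫ nabla A V eta mu psi = nu :=
  calc nu ≫ nabla A V eta mu psi
      = (λ_ (𝟙_ C)).inv ≫ (𝟙_ C ◁ eta) ≫ (nu ▷ A) ≫ phi A mu psi := by
        rw [nabla, whisker_exchange_assoc]; monoidal
    _ = eta ≫ beta A V mu nu := by rw [← hpre3]; monoidal
    _ = (ρ_ (𝟙_ C)).inv ≫ (𝟙_ C ◁ nu) ≫ (eta ▷ (A ⊗ V)) ≫ (α_ A A V).inv ≫ (mu ▷ V) := by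
        rw [beta, whisker_exchange_assoc]; monoidal
    _ = nu ≫ (λ_ (A ⊗ V)).inv ≫ (α_ (𝟙_ C) A V).inv ≫ (((eta ▷ A) ≫ mu) ▷ V) := by
        monoidal
    _ = nu := by rw [hunit]; monoidal

theorem vMul_measuring (hassoc : (mu ▷ A) ≫ mu = (α_ A A A).hom ≫ (A ◁ mu) ≫ mu)
    (hmeas : Measuring A V mu psi) :
    (psi ▷ (A ⊗ V)) ≫ (α_ A V (A ⊗ V)).hom ≫ tmap A mu (vMul A V mu psi sig) =
      (α_ V A (A ⊗ V)).hom ≫ (V ◁ ((α_ A A V).inv ≫ (mu ▷ V))) ≫ vMul A V mu psi sig := by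
  have hsig : (mu ▷ (V ⊗ V)) ≫ tmap A mu sig = _ := leftLin_tmap hassoc sig
  calc (psi ▷ (A ⊗ V)) ≫ (α_ A V (A ⊗ V)).hom ≫ tmap A mu (vMul A V mu psi sig)
      = (psi ▷ (A ⊗ V)) ≫ (α_ A V (A ⊗ V)).hom ≫
          (A ◁ ((α_ V A V).inv ≫ (psi ▷ V) ≫ (α_ A V V).hom)) ≫ (α_ A A (V ⊗ V)).inv ≫
          (mu ▷ (V ⊗ V)) ≫ tmap A mu sig := by
        rw [hsig]; simp only [vMul, phi, tmap]; monoidal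
    _ = (α_ (V ⊗ A) A V).inv ≫ (((psi ▷ A) ≫ phi A mu psi) ▷ V) ≫ (α_ A V V).hom ≫
          tmap A mu sig := by
        simp only [phi]; monoidal
    _ = (α_ (V ⊗ A) A V).inv ≫ (((α_ V A A).hom ≫ (V ◁ mu) ≫ psi) ▷ V) ≫
          (α_ A V V).hom ≫ tmap A mu sig := by
        rw [hmeas]
    _ = (α_ V A (A ⊗ V)).hom ≫ (V ◁ ((α_ A A V).inv ≫ (mu ▷ V))) ≫ vMul A V mu psi sig := by
        simp only [vMul, phi, tmap]; monoidal

theorem psiEta_whiskerRight_vMul (hunit : (eta ▷ A) ≫ mu = (λ_ A).hom)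
    (hassoc : (mu ▷ A) ≫ mu = (α_ A A A).hom ≫ (A ◁ mu) ≫ mu) (hmeas : Measuring A V mu psi) :
    (psiEta A V eta psi ▷ (A ⊗ V)) ≫ (α_ A V (A ⊗ V)).hom ≫
      tmap A mu (vMul A V mu psi sig) = vMul A V mu psi sig :=
  calc (psiEta A V eta psi ▷ (A ⊗ V)) ≫ (α_ A V (A ⊗ V)).hom ≫
        tmap A mu (vMul A V mu psi sig)
      = (((ρ_ V).inv ≫ (V ◁ eta)) ▷ (A ⊗ V)) ≫ (α_ V A (A ⊗ V)).hom ≫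
          (V ◁ ((α_ A A V).inv ≫ (mu ▷ V))) ≫ vMul A V mu psi sig := by
        rw [← vMul_measuring hassoc hmeas]; simp only [psiEta, comp_whiskerRight, Category.assoc]
    _ = (V ◁ ((λ_ (A ⊗ V)).inv ≫ (α_ (𝟙_ C) A V).inv ≫ (((eta ▷ A) ≫ mu) ▷ V))) ≫
          vMul A V mu psi sig := by
        monoidal
    _ = vMul A V mu psi sig := by rw [hunit]; monoidal

theorem whiskerLeft_psiEta_vMul (htw : Twisted A V mu psi sig)
    (hsig : sig ≫ nabla A V eta mu psi = sig) :
    (V ◁ psiEta A V eta psi) ≫ vMul A V mu psi sig = sig :=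
  calc (V ◁ psiEta A V eta psi) ≫ vMul A V mu psi sig
      = (ρ_ (V ⊗ V)).inv ≫ ((V ⊗ V) ◁ eta) ≫ (α_ V V A).hom ≫ (V ◁ psi) ≫
          (α_ V A V).inv ≫ (psi ▷ V) ≫ phi A mu sig := by
        simp only [psiEta, vMul]; monoidal
    _ = sig ≫ nabla A V eta mu psi := by
        rw [← htw, whisker_exchange_assoc, nabla]; monoidal
    _ = sig := hsig

theorem whiskerLeft_nabla_vMul (hassoc : (mu ▷ A) ≫ mu = (α_ A A A).hom ≫ (A ◁ mu) ≫ mu)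
    (hmeas : Measuring A V mu psi) (htw : Twisted A V mu psi sig)
    (hsig : sig ≫ nabla A V eta mu psi = sig) :
    (V ◁ nabla A V eta mu psi) ≫ vMul A V mu psi sig = vMul A V mu psi sig :=
  calc (V ◁ nabla A V eta mu psi) ≫ vMul A V mu psi sig
      = (α_ V A V).inv ≫ ((V ⊗ A) ◁ psiEta A V eta psi) ≫ (psi ▷ (A ⊗ V)) ≫
          (α_ A V (A ⊗ V)).hom ≫ tmap A mu (vMul A V mu psi sig) := by
        rw [vMul_measuring hassoc hmeas, nabla_eq_tmap, tmap]; monoidal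
    _ = (α_ V A V).inv ≫ (psi ▷ V) ≫ (α_ A V V).hom ≫
          (A ◁ ((V ◁ psiEta A V eta psi) ≫ vMul A V mu psi sig)) ≫ (α_ A A V).inv ≫
          (mu ▷ V) := by
        rw [whisker_exchange_assoc, tmap]; monoidal
    _ = vMul A V mu psi sig := by
        rw [whiskerLeft_psiEta_vMul htw hsig, vMul, phi]

theorem nabla_whiskerRight_prodAV (hunit : (eta ▷ A) ≫ mu = (λ_ A).hom)
    (hassoc : (mu ▷ A) ≫ mu = (α_ A A A).hom ≫ (A ◁ mu) ≫ mu) (hmeas : Measuring A V mu psi) :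
    (nabla A V eta mu psi ▷ (A ⊗ V)) ≫ prodAV A V mu psi sig = prodAV A V mu psi sig := by
  have hlin : (mu ▷ (V ⊗ (A ⊗ V))) ≫ tmap A mu (vMul A V mu psi sig) = _ :=
    leftLin_tmap hassoc _
  rw [prodAV_eq_tmap hassoc, nabla_eq_tmap]
  calc (tmap A mu (psiEta A V eta psi) ▷ (A ⊗ V)) ≫ (α_ A V (A ⊗ V)).hom ≫
        tmap A mu (vMul A V mu psi sig)
      = ((A ◁ psiEta A V eta psi) ▷ (A ⊗ V)) ≫ ((α_ A A V).inv ▷ (A ⊗ V)) ≫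
          (α_ (A ⊗ A) V (A ⊗ V)).hom ≫ (mu ▷ (V ⊗ (A ⊗ V))) ≫
          tmap A mu (vMul A V mu psi sig) := by
        simp only [tmap]; monoidal
    _ = (α_ A V (A ⊗ V)).hom ≫ tmap A mu ((psiEta A V eta psi ▷ (A ⊗ V)) ≫
          (α_ A V (A ⊗ V)).hom ≫ tmap A mu (vMul A V mu psi sig)) := by
        rw [hlin]; simp only [tmap]; monoidal
    _ = (α_ A V (A ⊗ V)).hom ≫ tmap A mu (vMul A V mu psi sig) := by
        rw [psiEta_whiskerRight_vMul hunit hassoc hmeas]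

theorem whiskerLeft_nabla_prodAV (hassoc : (mu ▷ A) ≫ mu = (α_ A A A).hom ≫ (A ◁ mu) ≫ mu)
    (hmeas : Measuring A V mu psi) (htw : Twisted A V mu psi sig)
    (hsig : sig ≫ nabla A V eta mu psi = sig) :
    ((A ⊗ V) ◁ nabla A V eta mu psi) ≫ prodAV A V mu psi sig = prodAV A V mu psi sig := by
  rw [prodAV_eq_tmap hassoc]
  calc ((A ⊗ V) ◁ nabla A V eta mu psi) ≫ (α_ A V (A ⊗ V)).hom ≫
        tmap A mu (vMul A V mu psi sig)
      = (α_ A V (A ⊗ V)).hom ≫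
          tmap A mu ((V ◁ nabla A V eta mu psi) ≫ vMul A V mu psi sig) := by
        simp only [tmap]; monoidal
    _ = (α_ A V (A ⊗ V)).hom ≫ tmap A mu (vMul A V mu psi sig) := by
        rw [whiskerLeft_nabla_vMul hassoc hmeas htw hsig]

theorem tensorHom_nabla_prodAV (hunit : (eta ▷ A) ≫ mu = (λ_ A).hom)
    (hassoc : (mu ▷ A) ≫ mu = (α_ A A A).hom ≫ (A ◁ mu) ≫ mu)
    (hmeas : Measuring A V mu psi) (htw : Twisted A V mu psi sig)
    (hsig : sig ≫ nabla A V eta mu psi = sig) :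
    (nabla A V eta mu psi ⊗ₘ nabla A V eta mu psi) ≫ prodAV A V mu psi sig =
      prodAV A V mu psi sig := by
  rw [MonoidalCategory.tensorHom_def, Category.assoc,
    whiskerLeft_nabla_prodAV hassoc hmeas htw hsig, nabla_whiskerRight_prodAV hunit hassoc hmeas]

end CrossedProduct

/-- if `T` is multiplicative and `S∘T = ∇_{A⊗V}`, `T∘S = ∇_{A⊗W}`,
then `S` is multiplicative; and if moreover `T∘ν_V = ν_W` then `S∘ν_W = ν_V`. -/
theorem S_multiplicative (A V W : C) (eta : 𝟙_ C ⟶ A) (mu : A ⊗ A ⟶ A)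
    (hA : IsMon A eta mu)
    (psiV : V ⊗ A ⟶ A ⊗ V) (sigV : V ⊗ V ⟶ A ⊗ V) (nuV : 𝟙_ C ⟶ A ⊗ V)
    (psiW : W ⊗ A ⟶ A ⊗ W) (sigW : W ⊗ W ⟶ A ⊗ W) (nuW : 𝟙_ C ⟶ A ⊗ W)
    (hV : WCPpre A V eta mu psiV sigV nuV) (hW : WCPpre A W eta mu psiW sigW nuW)
    (T : A ⊗ V ⟶ A ⊗ W) (S : A ⊗ W ⟶ A ⊗ V)
    (hm : prodAV A V mu psiV sigV ≫ T = (T ⊗ₘ T) ≫ prodAV A W mu psiW sigW)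
    (hTS : T ≫ S = nabla A V eta mu psiV) (hST : S ≫ T = nabla A W eta mu psiW) :
    prodAV A W mu psiW sigW ≫ S = (S ⊗ₘ S) ≫ prodAV A V mu psiV sigV ∧
    (nuV ≫ T = nuW → nuW ≫ S = nuV) := by
  obtain ⟨hunit, -, hassoc⟩ := hA
  obtain ⟨⟨-, -, -, hsigV⟩, -, -, hpre3V⟩ := hV
  obtain ⟨⟨hmeasW, htwW, -, hsigW⟩, -⟩ := hW
  refine ⟨mul_comp_of_retract hm ?_ ?_, fun hnu => ?_⟩
  · rw [hTS, prodAV_comp_nabla hassoc hsigV]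
  · rw [hST, tensorHom_nabla_prodAV hunit hassoc hmeasW htwW hsigW]
  · rw [← hnu, Category.assoc, hTS, nu_comp_nabla hunit hpre3V]

end WeakCrossed
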